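/- Suppose R is an equivalence relation on the vertex universe, e is a hyperedge, and X, Y are hypergraphs with 𝒞(X) ⊆ 𝒞(Y) (every component of X is a component of Y) and X = Y ∧ ẽ_Y (X is the union of the components of Y meeting some hyperedge in ẽ_Y). Then ẽ_X = ẽ_Y and ẽ_X ∩ E(X) = ẽ_Y ∩ E(Y). -/

import Mathlib

open Classical

universe u

/-- A (finite) hypergraph over a vertex universe `V`: a finite vertex set together with a
finite set of nonempty hyperedges, each a subset of the vertex set. -/
structure HGraph (V : Type u) where
  verts : Set V
  edges : Set (Set V)
  verts_finite : verts.Finite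
  edges_finite : edges.Finite
  edge_sub : ∀ e ∈ edges, e ⊆ verts
  edge_nonempty : ∀ e ∈ edges, e.Nonempty

namespace HGraph

variable {V : Type u}

/-- The null hypergraph `𝒩`. -/
def Null : HGraph V :=
  ⟨∅, ∅, Set.finite_empty, Set.finite_empty, by simp, by simp⟩

/-- Direct sum (hypergraph union) of two hypergraphs. -/
def dSum (X Y : HGraph V) : HGraph V where
  verts := X.verts ∪ Y.verts
  edges := X.edges ∪ Y.edges
  verts_finite := X.verts_finite.union Y.verts_finite
  edges_finite := X.edges_finite.union Y.edges_finite
  edge_sub := by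
    rintro e (he | he)
    · exact (X.edge_sub e he).trans Set.subset_union_left
    · exact (Y.edge_sub e he).trans Set.subset_union_right
  edge_nonempty := by
    rintro e (he | he)
    · exact X.edge_nonempty e he
    · exact Y.edge_nonempty e he

/-- Direct sum of a set of (pairwise disjoint) hypergraphs; the null hypergraph when the
unions fail to be finite.  The direct sum of the empty set is the null hypergraph. -/
noncomputable def bigSum (A : Set (HGraph V)) : HGraph V :=
  if h : (⋃ X ∈ A, X.verts).Finite ∧ (⋃ X ∈ A, X.edges).Finite then
    { verts := ⋃ X ∈ A, X.verts
      edges := ⋃ X ∈ A, X.edges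
      verts_finite := h.1
      edges_finite := h.2
      edge_sub := by
        intro e he
        simp only [Set.mem_iUnion] at he
        obtain ⟨X, hX, heX⟩ := he
        intro v hv
        simp only [Set.mem_iUnion]
        exact ⟨X, hX, X.edge_sub e heX hv⟩
      edge_nonempty := by
        intro e he
        simp only [Set.mem_iUnion] at he
        obtain ⟨X, hX, heX⟩ := he
        exact X.edge_nonempty e heX }
  else Null

/-- The direct difference `X ⊖ Z`: the unique hypergraph `W` vertex disjoint from `Z`
with `X = W ⊕ Z`, when it exists. -/
noncomputable def dDiff (X Z : HGraph V) : HGraph V :=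
  if h : ∃ W : HGraph V, Disjoint W.verts Z.verts ∧ X = dSum W Z then h.choose else X

/-- Two vertices are connected in `X` if there is a walk between them. -/
def Connected (X : HGraph V) (a b : V) : Prop :=
  a ∈ X.verts ∧ Relation.ReflTransGen (fun u w => ∃ e ∈ X.edges, u ∈ e ∧ w ∈ e) a b

/-- `C` is a connected component of `X`: its vertex set is a connectivity class of `X`
and its edges are the edges of `X` lying inside it. -/
def IsComponent (X C : HGraph V) : Prop :=
  (∃ v ∈ X.verts, C.verts = {w | Connected X v w}) ∧
  C.edges = {e ∈ X.edges | e ⊆ C.verts}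

/-- The set `𝒞(X)` of connected components of `X`. -/
def comps (X : HGraph V) : Set (HGraph V) := {C | IsComponent X C}

/-- Component disjointness: `𝒞(X) ∩ 𝒞(Y) = ∅`. -/
def CompDisjoint (X Y : HGraph V) : Prop := comps X ∩ comps Y = ∅

/-- `X ∧ H`: the union (direct sum) of the components of `X` meeting some hyperedge in `H`. -/
noncomputable def wedge (X : HGraph V) (H : Set (Set V)) : HGraph V :=
  bigSum {C ∈ comps X | ∃ f ∈ H, (f ∩ C.verts).Nonempty}

/-- `𝒮` is component maximal in `𝒳` with `𝒮`-maximal subsets given by `D`. -/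
def IsMaximalSubsets (dom S : Set (HGraph V))
    (D : HGraph V → Set (HGraph V)) : Prop :=
  ∀ X ∈ dom,
    D X ⊆ S ∧
    (D X).Pairwise CompDisjoint ∧
    (Null ∈ S → Null ∈ D X) ∧
    (∀ T ∈ D X, comps T ⊆ comps X) ∧
    (∀ s ∈ S, comps s ⊆ comps X → ∃ T ∈ D X, comps s ⊆ comps T)

/-- `𝒮_X := { S ∈ 𝒟_X | V(π(S)) ∩ V(X ⊖ S) = ∅ }`. -/
noncomputable def SXof (π : HGraph V → HGraph V)
    (D : HGraph V → Set (HGraph V)) (X : HGraph V) : Set (HGraph V) :=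
  {s ∈ D X | Disjoint (π s).verts (dDiff X s).verts}

/-- `(𝒳, π, 𝒮)` (with `𝒮`-maximal subsets `D`) is a hypergraph transformation:
nonredundancy, component maximality, and preservation of the direct sum decomposition. -/
def IsHGT (dom : Set (HGraph V)) (π : HGraph V → HGraph V)
    (S : Set (HGraph V)) (D : HGraph V → Set (HGraph V)) : Prop :=
  (∀ s ∈ S, comps s ∩ comps (π s) = ∅) ∧
  (Null ∈ S → π Null ≠ Null) ∧
  IsMaximalSubsets dom S D ∧
  ∀ X ∈ dom,
    (π '' SXof π D X).Pairwise (fun A B => Disjoint A.verts B.verts) ∧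
    Set.InjOn π (SXof π D X) ∧
    π X = dSum (dDiff X (bigSum (SXof π D X))) (bigSum (π '' SXof π D X))

/-- `𝒮'` is upward closed with respect to `𝒮`. -/
def UpwardClosed (S' S : Set (HGraph V)) : Prop :=
  ∀ s ∈ S', ∀ t ∈ S, comps s ⊆ comps t → t ∈ S'

end HGraph

namespace HGraph

variable {V : Type u}

/-- The equivalence class of `v` within the ambient set `F` under the relation `r`. -/
def cls (F : Set V) (r : V → V → Prop) (v : V) : Set V := {w ∈ F | r v w}

/-- The (vertex-augmented) quotient hypergraph of `X`, with classes taken within `F`: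
vertices are the classes of vertices of `X`, and a nonempty set `f` of such classes is a
hyperedge iff some `e ∈ E(X)` meets every class in `f` and is contained in their union. -/
def quotHG (X : HGraph V) (F : Set V) (r : V → V → Prop) : HGraph (Set V) where
  verts := cls F r '' X.verts
  edges := {f | f.Nonempty ∧ f ⊆ cls F r '' X.verts ∧
    ∃ e ∈ X.edges, (∀ c ∈ f, (e ∩ c).Nonempty) ∧ e ⊆ ⋃₀ f}
  verts_finite := X.verts_finite.image _
  edges_finite := by
    apply Set.Finite.subset (X.verts_finite.image (cls F r)).finite_subsets
    intro f hf
    exact hf.2.1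
  edge_sub := fun e he => he.2.1
  edge_nonempty := fun e he => he.1

/-- The class of `v` under `r` in the whole vertex universe. -/
def clsU (r : V → V → Prop) (v : V) : Set V := {w | r v w}

/-- The set `ẽ` of `e`-equivalent hyperedges: finite nonempty vertex sets with the same
vertex-augmented quotient as `e`. -/
def etilde (r : V → V → Prop) (e : Set V) : Set (Set V) :=
  {f | f.Nonempty ∧ f.Finite ∧ clsU r '' f = clsU r '' e}

/-- `ẽ_X`: the `e`-equivalent hyperedges contained in `V(X)`. -/
def etildeX (r : V → V → Prop) (e : Set V) (X : HGraph V) : Set (Set V) :=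
  {f ∈ etilde r e | f ⊆ X.verts}

end HGraph

open HGraph

/-!
Every vertex `v` of a hyperedge `f ∈ ẽ_Y` lies in the component of `Y` through `v`, which
meets `f`; so that component is part of `X = Y ∧ ẽ_Y`, whence `ẽ_Y ⊆ ẽ_X`. Likewise an edge
`g ∈ ẽ_Y ∩ E(Y)` lies inside the component through any of its vertices, which meets `g`.
-/

namespace HGraph

variable {V : Type u} {Y : HGraph V}

lemma Connected.mem_verts {v w : V} (h : Connected Y v w) : w ∈ Y.verts := by
  obtain ⟨hv, hvw⟩ := h
  induction hvw with
  | refl => exact hv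
  | tail _ hstep _ =>
    obtain ⟨g, hg, _, hw⟩ := hstep
    exact Y.edge_sub g hg hw

lemma verts_subset_of_mem_comps {C : HGraph V} (hC : C ∈ comps Y) : C.verts ⊆ Y.verts := by
  obtain ⟨⟨v, _, hCv⟩, _⟩ := hC
  rw [hCv]
  exact fun _ hw => Connected.mem_verts hw

lemma edges_subset_of_mem_comps {C : HGraph V} (hC : C ∈ comps Y) : C.edges ⊆ Y.edges := by
  rw [hC.2]
  exact fun _ hg => hg.1

def compOf (Y : HGraph V) (v : V) : HGraph V where
  verts := {w | Connected Y v w}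
  edges := {g ∈ Y.edges | g ⊆ {w | Connected Y v w}}
  verts_finite := Y.verts_finite.subset fun _ hw => Connected.mem_verts hw
  edges_finite := Y.edges_finite.subset fun _ hg => hg.1
  edge_sub := fun _ hg => hg.2
  edge_nonempty := fun g hg => Y.edge_nonempty g hg.1

lemma compOf_mem_comps {v : V} (hv : v ∈ Y.verts) : compOf Y v ∈ comps Y :=
  ⟨⟨v, hv, rfl⟩, rfl⟩

lemma mem_compOf_self {v : V} (hv : v ∈ Y.verts) : v ∈ (compOf Y v).verts :=
  ⟨hv, .refl⟩

lemma mem_compOf_edges {g : Set V} (hg : g ∈ Y.edges) {v : V} (hvg : v ∈ g) :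
    g ∈ (compOf Y v).edges :=
  ⟨hg, fun _ hw => ⟨Y.edge_sub g hg hvg, .single ⟨g, hg, hvg, hw⟩⟩⟩

section bigSum

variable {S : Set (HGraph V)}

lemma finite_iUnion_of_subset_comps (hS : S ⊆ comps Y) :
    (⋃ C ∈ S, C.verts).Finite ∧ (⋃ C ∈ S, C.edges).Finite :=
  ⟨Y.verts_finite.subset <| Set.iUnion₂_subset fun _ hC => verts_subset_of_mem_comps (hS hC),
    Y.edges_finite.subset <| Set.iUnion₂_subset fun _ hC => edges_subset_of_mem_comps (hS hC)⟩

lemma bigSum_verts_of_subset_comps (hS : S ⊆ comps Y) :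
    (bigSum S).verts = ⋃ C ∈ S, C.verts := by
  simp only [bigSum, dif_pos (finite_iUnion_of_subset_comps hS)]

lemma bigSum_edges_of_subset_comps (hS : S ⊆ comps Y) :
    (bigSum S).edges = ⋃ C ∈ S, C.edges := by
  simp only [bigSum, dif_pos (finite_iUnion_of_subset_comps hS)]

end bigSum

section wedge

variable {H : Set (Set V)}

lemma wedge_components_subset_comps :
    {C ∈ comps Y | ∃ f ∈ H, (f ∩ C.verts).Nonempty} ⊆ comps Y :=
  fun _ hC => hC.1

lemma wedge_verts_subset : (wedge Y H).verts ⊆ Y.verts := by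
  rw [wedge, bigSum_verts_of_subset_comps wedge_components_subset_comps]
  exact Set.iUnion₂_subset fun _ hC => verts_subset_of_mem_comps hC.1

lemma wedge_edges_subset : (wedge Y H).edges ⊆ Y.edges := by
  rw [wedge, bigSum_edges_of_subset_comps wedge_components_subset_comps]
  exact Set.iUnion₂_subset fun _ hC => edges_subset_of_mem_comps hC.1

lemma subset_wedge_verts {f : Set V} (hfH : f ∈ H) (hfY : f ⊆ Y.verts) :
    f ⊆ (wedge Y H).verts := by
  intro v hvf
  rw [wedge, bigSum_verts_of_subset_comps wedge_components_subset_comps]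
  have hv := hfY hvf
  exact Set.mem_biUnion ⟨compOf_mem_comps hv, f, hfH, v, hvf, mem_compOf_self hv⟩
    (mem_compOf_self hv)

lemma mem_wedge_edges {g : Set V} (hgH : g ∈ H) (hgY : g ∈ Y.edges) :
    g ∈ (wedge Y H).edges := by
  obtain ⟨v, hvg⟩ := Y.edge_nonempty g hgY
  rw [wedge, bigSum_edges_of_subset_comps wedge_components_subset_comps]
  exact Set.mem_biUnion
    ⟨compOf_mem_comps (Y.edge_sub g hgY hvg), g, hgH, v, hvg, (mem_compOf_edges hgY hvg).2 hvg⟩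
    (mem_compOf_edges hgY hvg)

lemma inter_wedge_edges : H ∩ (wedge Y H).edges = H ∩ Y.edges :=
  Set.ext fun _ => ⟨fun ⟨hgH, hgX⟩ => ⟨hgH, wedge_edges_subset hgX⟩,
    fun ⟨hgH, hgY⟩ => ⟨hgH, mem_wedge_edges hgH hgY⟩⟩

end wedge

lemma etildeX_wedge (r : V → V → Prop) (e : Set V) :
    etildeX r e (wedge Y (etildeX r e Y)) = etildeX r e Y :=
  Set.ext fun _ => ⟨fun ⟨hf, hfX⟩ => ⟨hf, hfX.trans wedge_verts_subset⟩,
    fun hfH => ⟨hfH.1, subset_wedge_verts hfH hfH.2⟩⟩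

end HGraph

theorem stmt18_general {V : Type u} (r : V → V → Prop)
    (e : Set V)
    (X Y : HGraph V)
    (hX : X = wedge Y (etildeX r e Y)) :
    etildeX r e X = etildeX r e Y ∧
    etildeX r e X ∩ X.edges = etildeX r e Y ∩ Y.edges := by
  subst hX
  rw [etildeX_wedge]
  exact ⟨rfl, inter_wedge_edges⟩

theorem stmt18 {V : Type u} (r : V → V → Prop) (hr : Equivalence r)
    (e : Set V) (he : e.Nonempty) (hef : e.Finite)
    (X Y : HGraph V)
    (hc : comps X ⊆ comps Y)
    (hX : X = wedge Y (etildeX r e Y)) :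
    etildeX r e X = etildeX r e Y ∧
    etildeX r e X ∩ X.edges = etildeX r e Y ∩ Y.edges :=
  stmt18_general r e X Y hX
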